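/- For any p > 0 and a < b, the function F(α) = 1/(1 + e^{p(a - α)}) + 1/(1 + e^{p(α - b)}) - 1 is strictly increasing on (-∞, (a+b)/2] and strictly decreasing on [(a+b)/2, ∞). -/

import Mathlib

/-!
Writing `x = exp (p (a - α))` and `y = exp (p (α - b))`, the product `x y = exp (p (a - b))` does
not depend on `α`, and `1/(1+x) + 1/(1+y) - 1 = (1 - x y) / (1 + x y + x + y)`. Moreover
`x + y = 2 exp (p (a - b) / 2) cosh (p (α - (a + b) / 2))`, so the window is a positive constant
divided by an increasing affine function of `cosh (p (α - (a + b) / 2))`, and it is monotone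
exactly as `|α - (a + b) / 2|` is antitone.
-/

open Real

theorem exp_add_exp_eq_mul_cosh (s t : ℝ) :
    exp s + exp t = 2 * exp ((s + t) / 2) * cosh ((s - t) / 2) := by
  have hs : exp s = exp ((s + t) / 2) * exp ((s - t) / 2) := by rw [← exp_add]; ring_nf
  have ht : exp t = exp ((s + t) / 2) * exp (-((s - t) / 2)) := by rw [← exp_add]; ring_nf
  rw [cosh_eq, hs, ht]
  ring

theorem one_div_one_add_add_one_div_one_add_sub_one {K : Type*} [Field K] {x y : K}
    (hx : 1 + x ≠ 0) (hy : 1 + y ≠ 0) :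
    1 / (1 + x) + 1 / (1 + y) - 1 = (1 - x * y) / (1 + x * y + (x + y)) := by
  rw [show 1 + x * y + (x + y) = (1 + x) * (1 + y) by ring]
  field_simp
  ring

theorem sigmoid_window_eq_div_cosh (p a b α : ℝ) :
    1 / (1 + exp (p * (a - α))) + 1 / (1 + exp (p * (α - b))) - 1 =
      (1 - exp (p * (a - b))) /
        (1 + exp (p * (a - b)) + 2 * exp (p * (a - b) / 2) * cosh (p * (α - (a + b) / 2))) := by
  rw [one_div_one_add_add_one_div_one_add_sub_one (by positivity) (by positivity), ← exp_add,
    exp_add_exp_eq_mul_cosh, ← cosh_neg ((_ - _) / 2)]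
  ring_nf

theorem div_add_mul_cosh_lt {c d e s t : ℝ} (hc : 0 < c) (hd : 0 < d) (he : 0 < e)
    (hst : |s| < |t|) : c / (d + e * cosh t) < c / (d + e * cosh s) :=
  div_lt_div_of_pos_left hc (by positivity) <| by gcongr; exact cosh_lt_cosh.2 hst

theorem stmt_3 (p a b : ℝ) (hp : 0 < p) (hab : a < b) :
    StrictMonoOn
      (fun α : ℝ => 1 / (1 + Real.exp (p * (a - α))) + 1 / (1 + Real.exp (p * (α - b))) - 1)
      (Set.Iic ((a + b) / 2)) ∧
    StrictAntiOn
      (fun α : ℝ => 1 / (1 + Real.exp (p * (a - α))) + 1 / (1 + Real.exp (p * (α - b))) - 1)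
      (Set.Ici ((a + b) / 2)) := by
  simp only [sigmoid_window_eq_div_cosh]
  have hc : 0 < 1 - exp (p * (a - b)) := sub_pos.2 <| exp_lt_one_iff.2 <| by nlinarith
  refine ⟨fun x hx y hy hxy => ?_, fun x hx y hy hxy => ?_⟩ <;>
    refine div_add_mul_cosh_lt hc (by positivity) (by positivity) ?_
  · rw [Set.mem_Iic] at hx hy
    rw [abs_of_nonpos (by nlinarith), abs_of_nonpos (by nlinarith)]
    nlinarith
  · rw [Set.mem_Ici] at hx hy
    rw [abs_of_nonneg (by nlinarith), abs_of_nonneg (by nlinarith)]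
    nlinarith
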